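/- There exists p ∈ ℝ^d with all entries positive and p_1 = 1 such that for every q ∈ ℝ^d with all entries positive, min_{w ∈ W_d} G(q,w) ≤ min_{w ∈ W_d} G(p,w); that is, the supremum over the positive orthant of the function p ↦ min_{w ∈ W_d} G(p,w) is attained at a point with first coordinate 1. -/

import Mathlib

def wvec (d : ℕ) (j : Fin d) : Fin d → ℕ :=
  fun i => if i < j then 0 else if i = j then (j : ℕ) + 1 else (i : ℕ)

noncomputable def G (d : ℕ) (p : Fin d → ℝ) (w : Fin d → ℕ) : ℝ :=
  (∏ i, p i) / (Real.sqrt (∑ i, ((w i : ℝ)) ^ 2 * p i ^ 2)) ^ d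

noncomputable def minG (d : ℕ) (p : Fin d → ℝ) : ℝ :=
  ⨅ j : Fin d, G d p (wvec d j)

noncomputable def D (d : ℕ) (j : Fin d) (p : Fin d → ℝ) : ℝ :=
  Real.sqrt (∑ i, ((wvec d j i : ℝ)) ^ 2 * p i ^ 2)

/-- `p*`: `p*_1 = 1`, `p*_2 = 1/√3`, `p*_j = √(2/3)/(j−1)` for `3 ≤ j ≤ d`
(0-based: index `i` has 1-based position `i+1`, so the denominator `j−1` is `i`). -/
noncomputable def pstar (d : ℕ) : Fin d → ℝ :=
  fun i => if (i : ℕ) = 0 then 1 else if (i : ℕ) = 1 then 1 / Real.sqrt 3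
    else Real.sqrt (2 / 3) / ((i : ℕ) : ℝ)
/-!
For the weights `c = ⅔ (w⁽¹⁾)² + ⅓ (w⁽²⁾)²` (`pairWeight`), the larger of `∑ (w⁽¹⁾ᵢ qᵢ)²` and
`∑ (w⁽²⁾ᵢ qᵢ)²` is at least `∑ cᵢ qᵢ²`, so AM-GM gives `min_w G(q,w)² ≤ (dᵈ ∏ cᵢ)⁻¹` for every
`q`. The point `p*` has `cᵢ p*ᵢ² = 2/3` for all `i`, which is the equality case of AM-GM, and
`∑ (w⁽ʲ⁾ᵢ p*ᵢ)² ≤ 2d/3 = ∑ cᵢ p*ᵢ²` for every `j`, so `min_w G(p*,w)` attains the bound.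
-/

open Finset

section WeightedG

variable {ι : Type*} [Fintype ι]

noncomputable def weightedG (a p : ι → ℝ) : ℝ :=
  (∏ i, p i) / √(∑ i, a i * p i ^ 2) ^ Fintype.card ι

theorem weightedG_le_weightedG {a b p : ι → ℝ} (hp : 0 ≤ ∏ i, p i)
    (ha : 0 < ∑ i, a i * p i ^ 2) (hab : ∑ i, a i * p i ^ 2 ≤ ∑ i, b i * p i ^ 2) :
    weightedG b p ≤ weightedG a p := by
  unfold weightedG
  gcongr

variable [Nonempty ι]

theorem pow_card_mul_prod_le_sum_pow (z : ι → ℝ) (hz : ∀ i, 0 ≤ z i) :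
    (Fintype.card ι : ℝ) ^ Fintype.card ι * ∏ i, z i ≤ (∑ i, z i) ^ Fintype.card ι := by
  have hn : (0 : ℝ) < Fintype.card ι := by exact_mod_cast Fintype.card_pos
  have amgm := Real.geom_mean_le_arith_mean univ (fun _ => 1) z (fun _ _ => zero_le_one)
    (by simp [Fintype.card_pos]) (fun i _ => hz i)
  simp only [Real.rpow_one, sum_const, card_univ, nsmul_eq_mul, mul_one, one_mul] at amgm
  have hprod : 0 ≤ ∏ i, z i := prod_nonneg fun i _ => hz i
  calc (Fintype.card ι : ℝ) ^ Fintype.card ι * ∏ i, z i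
      = (Fintype.card ι : ℝ) ^ Fintype.card ι *
          ((∏ i, z i) ^ ((Fintype.card ι : ℝ)⁻¹)) ^ Fintype.card ι := by
        rw [Real.rpow_inv_natCast_pow hprod Fintype.card_ne_zero]
    _ ≤ (Fintype.card ι : ℝ) ^ Fintype.card ι * ((∑ i, z i) / Fintype.card ι) ^ Fintype.card ι := by
        gcongr
    _ = (∑ i, z i) ^ Fintype.card ι := by rw [div_pow]; field_simp

theorem sq_weightedG_le {a : ι → ℝ} (ha : ∀ i, 0 < a i) (q : ι → ℝ) :
    weightedG a q ^ 2 ≤ ((Fintype.card ι : ℝ) ^ Fintype.card ι * ∏ i, a i)⁻¹ := by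
  have hS : 0 ≤ ∑ i, a i * q i ^ 2 := sum_nonneg fun i _ => by have := ha i; positivity
  have hn : (0 : ℝ) < Fintype.card ι := by exact_mod_cast Fintype.card_pos
  have hA : 0 < (Fintype.card ι : ℝ) ^ Fintype.card ι * ∏ i, a i :=
    mul_pos (by positivity) (prod_pos fun i _ => ha i)
  have amgm := pow_card_mul_prod_le_sum_pow (fun i => a i * q i ^ 2)
    fun i => by have := ha i; positivity
  rw [prod_mul_distrib, prod_pow] at amgm
  rw [weightedG, div_pow, ← pow_mul, mul_comm, pow_mul, Real.sq_sqrt hS]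
  refine div_le_of_le_mul₀ (by positivity) (by positivity) ?_
  rw [inv_mul_eq_div, le_div_iff₀ hA]
  linarith

theorem sq_weightedG_of_forall_eq {a p : ι → ℝ} {t : ℝ} (ha : ∀ i, 0 < a i) (hp : ∀ i, 0 < p i)
    (hap : ∀ i, a i * p i ^ 2 = t) :
    weightedG a p ^ 2 = ((Fintype.card ι : ℝ) ^ Fintype.card ι * ∏ i, a i)⁻¹ := by
  have hS : 0 ≤ ∑ i, a i * p i ^ 2 := sum_nonneg fun i _ => by have := ha i; positivity
  have hprod : (∏ i, a i) * (∏ i, p i) ^ 2 = t ^ Fintype.card ι := by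
    rw [← prod_pow, ← prod_mul_distrib, prod_congr rfl fun i _ => hap i, prod_const, card_univ]
  have hsum : ∑ i, a i * p i ^ 2 = Fintype.card ι * t := by simp [hap]
  have hn : (0 : ℝ) < Fintype.card ι := by exact_mod_cast Fintype.card_pos
  have hp' : ∏ i, p i ≠ 0 := (prod_pos fun i _ => hp i).ne'
  have ha' : ∏ i, a i ≠ 0 := (prod_pos fun i _ => ha i).ne'
  rw [weightedG, div_pow, ← pow_mul, mul_comm _ 2, pow_mul, Real.sq_sqrt hS, hsum, mul_pow,
    ← hprod]
  field_simp

theorem weightedG_le_of_forall_eq {a p : ι → ℝ} {t : ℝ} (ha : ∀ i, 0 < a i)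
    (hp : ∀ i, 0 < p i) (hap : ∀ i, a i * p i ^ 2 = t) (q : ι → ℝ) :
    weightedG a q ≤ weightedG a p := by
  have hG : 0 ≤ weightedG a p :=
    div_nonneg (prod_nonneg fun i _ => (hp i).le) (by positivity)
  refine (abs_le_of_sq_le_sq' ?_ hG).2
  rw [sq_weightedG_of_forall_eq ha hp hap]
  exact sq_weightedG_le ha q

end WeightedG

section Pstar

variable {d : ℕ}

theorem wvec_of_lt {i j : Fin d} (h : i < j) : wvec d j i = 0 := if_pos h

theorem wvec_self (j : Fin d) : wvec d j j = j + 1 := by simp [wvec]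

theorem wvec_of_gt {i j : Fin d} (h : j < i) : wvec d j i = i := by
  simp [wvec, h.not_gt, h.ne']

theorem G_eq_weightedG (p : Fin d → ℝ) (w : Fin d → ℕ) :
    G d p w = weightedG (fun i => (w i : ℝ) ^ 2) p := by
  rw [weightedG, Fintype.card_fin]
  rfl

theorem sum_wvec_sq_mul_sq_pos (j : Fin d) {q : Fin d → ℝ} (hq : q j ≠ 0) :
    0 < ∑ i, (wvec d j i : ℝ) ^ 2 * q i ^ 2 :=
  sum_pos' (fun i _ => by positivity) ⟨j, mem_univ j, by rw [wvec_self]; positivity⟩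

theorem pstar_pos (i : Fin d) : 0 < pstar d i := by
  unfold pstar
  split_ifs <;> positivity

theorem natCast_sq_mul_sq_pstar {i : Fin d} (hi : 2 ≤ (i : ℕ)) :
    ((i : ℕ) : ℝ) ^ 2 * pstar d i ^ 2 = 2 / 3 := by
  have : ((i : ℕ) : ℝ) ≠ 0 := by norm_cast; omega
  rw [pstar, if_neg (by omega), if_neg (by omega), div_pow, Real.sq_sqrt (by norm_num)]
  field_simp

theorem sum_wvec_sq_mul_sq_pstar_le_of_two_le {j : Fin d} (hj : 2 ≤ (j : ℕ)) :
    ∑ i, (wvec d j i : ℝ) ^ 2 * pstar d i ^ 2 ≤ 2 / 3 * d := by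
  have term_le : ∀ i, (wvec d j i : ℝ) ^ 2 * pstar d i ^ 2 ≤
      2 / 3 * ((if i = j then ((j : ℕ) : ℝ) else 0) + if j ≤ i then 1 else 0) := by
    intro i
    rcases lt_trichotomy i j with h | rfl | h
    · simp [wvec_of_lt h, h.ne, h.not_ge]
    · -- `(j + 1)² p*ⱼ² = ⅔ (j + 1)² / j² ≤ ⅔ (j + 1)` because `j + 1 ≤ j²` for `j ≥ 2`
      have hp := natCast_sq_mul_sq_pstar hj
      have hx : (2 : ℝ) ≤ (i : ℕ) := by exact_mod_cast hj
      simp only [wvec_self, if_true, le_refl]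
      push_cast
      nlinarith [sq_nonneg (pstar d i), mul_nonneg (sq_nonneg (pstar d i)) (sub_nonneg.2 hx)]
    · have hi : 2 ≤ (i : ℕ) := by rw [Fin.lt_def] at h; omega
      simp [wvec_of_gt h, h.ne', h.le, natCast_sq_mul_sq_pstar hi]
  calc ∑ i, (wvec d j i : ℝ) ^ 2 * pstar d i ^ 2
      ≤ ∑ i, 2 / 3 * ((if i = j then ((j : ℕ) : ℝ) else 0) + if j ≤ i then 1 else 0) :=
        sum_le_sum fun i _ => term_le i
    _ = 2 / 3 * d := by
        rw [← mul_sum, sum_add_distrib, sum_ite_eq', sum_boole, filter_le_eq_Ici, Fin.card_Ici]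
        simp [Nat.cast_sub j.isLt.le]

end Pstar

noncomputable def pairWeight (n : ℕ) (i : Fin (n + 2)) : ℝ :=
  2 / 3 * (wvec (n + 2) 0 i : ℝ) ^ 2 + 1 / 3 * (wvec (n + 2) 1 i : ℝ) ^ 2

section PairWeight

variable {n : ℕ}

theorem fin_eq_zero_or_eq_one_or_two_le (i : Fin (n + 2)) : i = 0 ∨ i = 1 ∨ 2 ≤ (i : ℕ) := by
  rcases i with ⟨_ | _ | k, hk⟩ <;> simp [Fin.ext_iff]

theorem pairWeight_mul_sq_pstar (i : Fin (n + 2)) :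
    pairWeight n i * pstar (n + 2) i ^ 2 = 2 / 3 := by
  obtain rfl | rfl | hi := fin_eq_zero_or_eq_one_or_two_le i
  · simp [pairWeight, wvec, pstar]
  · simp [pairWeight, wvec, pstar]
    norm_num
  · have h0 : (0 : Fin (n + 2)) < i := by simp only [Fin.lt_def, Fin.val_zero]; omega
    have h1 : (1 : Fin (n + 2)) < i := by simp only [Fin.lt_def, Fin.val_one]; omega
    rw [pairWeight, wvec_of_gt h0, wvec_of_gt h1]
    linear_combination natCast_sq_mul_sq_pstar hi

theorem pairWeight_pos (i : Fin (n + 2)) : 0 < pairWeight n i := by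
  refine pos_of_mul_pos_left (b := pstar (n + 2) i ^ 2) ?_ (sq_nonneg _)
  rw [pairWeight_mul_sq_pstar]
  norm_num

theorem sum_pairWeight_mul_sq (q : Fin (n + 2) → ℝ) :
    ∑ i, pairWeight n i * q i ^ 2 = 2 / 3 * ∑ i, (wvec (n + 2) 0 i : ℝ) ^ 2 * q i ^ 2 +
      1 / 3 * ∑ i, (wvec (n + 2) 1 i : ℝ) ^ 2 * q i ^ 2 := by
  simp only [pairWeight, mul_sum, ← sum_add_distrib]
  exact sum_congr rfl fun i _ => by ring

theorem sum_pairWeight_mul_sq_pstar :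
    ∑ i, pairWeight n i * pstar (n + 2) i ^ 2 = 2 / 3 * (n + 2 : ℕ) := by
  simp [pairWeight_mul_sq_pstar, mul_comm]

theorem sum_wvec_zero_eq_sum_wvec_one_pstar :
    ∑ i, (wvec (n + 2) 0 i : ℝ) ^ 2 * pstar (n + 2) i ^ 2 =
      ∑ i, (wvec (n + 2) 1 i : ℝ) ^ 2 * pstar (n + 2) i ^ 2 := by
  rw [← sub_eq_zero, ← sum_sub_distrib, Fintype.sum_eq_add 0 1 zero_ne_one]
  · simp [wvec, pstar]
    norm_num
  · rintro i ⟨h0, h1⟩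
    have hi : 2 ≤ (i : ℕ) := by
      rcases fin_eq_zero_or_eq_one_or_two_le i with rfl | rfl | hi <;> simp_all
    rw [wvec_of_gt (by simp only [Fin.lt_def, Fin.val_zero]; omega),
      wvec_of_gt (by simp only [Fin.lt_def, Fin.val_one]; omega), sub_self]

theorem sum_wvec_sq_mul_sq_pstar_le (j : Fin (n + 2)) :
    ∑ i, (wvec (n + 2) j i : ℝ) ^ 2 * pstar (n + 2) i ^ 2 ≤
      ∑ i, pairWeight n i * pstar (n + 2) i ^ 2 := by
  have hS := sum_pairWeight_mul_sq (pstar (n + 2))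
  have h01 := sum_wvec_zero_eq_sum_wvec_one_pstar (n := n)
  obtain rfl | rfl | hj := fin_eq_zero_or_eq_one_or_two_le j
  · linarith
  · linarith
  · rw [sum_pairWeight_mul_sq_pstar]
    exact sum_wvec_sq_mul_sq_pstar_le_of_two_le hj

theorem minG_le_weightedG_pairWeight {q : Fin (n + 2) → ℝ} (hq : ∀ i, 0 < q i) :
    minG (n + 2) q ≤ weightedG (pairWeight n) q := by
  have hpos : 0 < ∑ i, pairWeight n i * q i ^ 2 :=
    sum_pos (fun i _ => mul_pos (pairWeight_pos i) (pow_pos (hq i) 2)) univ_nonempty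
  have le_of_le : ∀ j, ∑ i, pairWeight n i * q i ^ 2 ≤ ∑ i, (wvec (n + 2) j i : ℝ) ^ 2 * q i ^ 2 →
      minG (n + 2) q ≤ weightedG (pairWeight n) q := fun j hj =>
    (ciInf_le (Set.finite_range _).bddBelow j).trans <| by
      rw [G_eq_weightedG]
      exact weightedG_le_weightedG (prod_nonneg fun i _ => (hq i).le) hpos hj
  rw [sum_pairWeight_mul_sq] at le_of_le
  rcases le_total (∑ i, (wvec (n + 2) 0 i : ℝ) ^ 2 * q i ^ 2)
      (∑ i, (wvec (n + 2) 1 i : ℝ) ^ 2 * q i ^ 2) with h | h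
  · exact le_of_le 1 (by linarith)
  · exact le_of_le 0 (by linarith)

theorem weightedG_pairWeight_pstar_le_minG :
    weightedG (pairWeight n) (pstar (n + 2)) ≤ minG (n + 2) (pstar (n + 2)) :=
  le_ciInf fun j => by
    rw [G_eq_weightedG]
    exact weightedG_le_weightedG (prod_nonneg fun i _ => (pstar_pos i).le)
      (sum_wvec_sq_mul_sq_pos j (pstar_pos j).ne') (sum_wvec_sq_mul_sq_pstar_le j)

end PairWeight

/-- The supremum of `p ↦ min_{w ∈ W_d} G(p,w)` over the positive orthant is attained
at a point with first coordinate equal to `1`. -/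
theorem stmt3 (d : ℕ) (hd : 2 ≤ d) :
    ∃ p : Fin d → ℝ, (∀ i, 0 < p i) ∧ p ⟨0, by omega⟩ = 1 ∧
      ∀ q : Fin d → ℝ, (∀ i, 0 < q i) → minG d q ≤ minG d p := by
  obtain ⟨n, rfl⟩ := Nat.exists_eq_add_of_le' hd
  refine ⟨pstar (n + 2), pstar_pos, by simp [pstar], fun q hq => ?_⟩
  calc minG (n + 2) q ≤ weightedG (pairWeight n) q := minG_le_weightedG_pairWeight hq
    _ ≤ weightedG (pairWeight n) (pstar (n + 2)) :=
        weightedG_le_of_forall_eq pairWeight_pos pstar_pos pairWeight_mul_sq_pstar q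
    _ ≤ minG (n + 2) (pstar (n + 2)) := weightedG_pairWeight_pstar_le_minG
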